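/- arXiv:2509.03532 — 5 statements merged into one kernel-verified Lean document; each statement's English description precedes it below -/
import Mathlib

section
/- If f(z) = Σ_{s≥0} a_s z^s is analytic on the unit disk with |f(z)| ≤ 1 for all |z| < 1, then Σ_{s≥0} |a_s| r^s ≤ 1 for all 0 ≤ r ≤ 1/3. -/
/-!
Wiener's inequality `‖a n‖ ≤ 1 - ‖a 0‖ ^ 2` for `n ≥ 1` is enough: it gives
`∑ ‖a s‖ r ^ s ≤ ‖a 0‖ + (1 - ‖a 0‖ ^ 2) r / (1 - r) ≤ ‖a 0‖ + (1 - ‖a 0‖ ^ 2) / 2 ≤ 1`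
for `r ≤ 1 / 3`.

For `n = 1` Wiener's inequality is the Schwarz–Pick estimate at the origin: compose `f` with the
disc automorphism `w ↦ (w - a 0) / (1 - conj (a 0) * w)` and apply the Schwarz lemma. For general
`n`, averaging `f` over the rotations `z ↦ ω ^ k * z` by the `n`-th roots of unity leaves the
lacunary series `∑ a (n * m) * z ^ (n * m)`, a function of `w = z ^ n` bounded by `1` whose first
two coefficients are `a 0` and `a n`.
-/

open Metric Complex Set ComplexConjugate FormalMultilinearSeries Finset

noncomputable def blaschkeFactor (c w : ℂ) : ℂ := (w - c) / (1 - conj c * w)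

section BlaschkeFactor

variable {c : ℂ}

theorem normSq_one_sub_conj_mul_sub_normSq_sub (c v : ℂ) :
    normSq (1 - conj c * v) - normSq (v - c) = (1 - normSq c) * (1 - normSq v) := by
  simp only [normSq_apply, sub_re, sub_im, mul_re, mul_im, one_re, one_im, conj_re, conj_im]
  ring

theorem norm_sub_lt_norm_one_sub_conj_mul (hc : ‖c‖ < 1) {v : ℂ} (hv : ‖v‖ < 1) :
    ‖v - c‖ < ‖1 - conj c * v‖ := by
  have h := normSq_one_sub_conj_mul_sub_normSq_sub c v
  simp only [normSq_eq_norm_sq] at h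
  have : 0 < (1 - ‖c‖ ^ 2) * (1 - ‖v‖ ^ 2) :=
    mul_pos (by nlinarith [norm_nonneg c]) (by nlinarith [norm_nonneg v])
  exact lt_of_pow_lt_pow_left₀ 2 (norm_nonneg _) (by linarith)

theorem one_sub_conj_mul_ne_zero (hc : ‖c‖ < 1) {v : ℂ} (hv : ‖v‖ < 1) :
    1 - conj c * v ≠ 0 :=
  norm_pos_iff.1 ((norm_nonneg _).trans_lt (norm_sub_lt_norm_one_sub_conj_mul hc hv))

theorem blaschkeFactor_self (c : ℂ) : blaschkeFactor c c = 0 := by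
  simp [blaschkeFactor]

theorem norm_blaschkeFactor_lt_one (hc : ‖c‖ < 1) {v : ℂ} (hv : ‖v‖ < 1) :
    ‖blaschkeFactor c v‖ < 1 := by
  rw [blaschkeFactor, norm_div, div_lt_one (norm_pos_iff.2 (one_sub_conj_mul_ne_zero hc hv))]
  exact norm_sub_lt_norm_one_sub_conj_mul hc hv

theorem hasDerivAt_blaschkeFactor (hc : ‖c‖ < 1) {v : ℂ} (hv : ‖v‖ < 1) :
    HasDerivAt (blaschkeFactor c) ((1 - conj c * c) / (1 - conj c * v) ^ 2) v := by
  have hnum : HasDerivAt (fun w => w - c) 1 v := (hasDerivAt_id v).sub_const c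
  have hden : HasDerivAt (fun w => 1 - conj c * w) (-conj c) v := by
    simpa using ((hasDerivAt_id v).const_mul (conj c)).const_sub 1
  exact (hnum.div hden (one_sub_conj_mul_ne_zero hc hv)).congr_deriv (by ring)

theorem hasDerivAt_blaschkeFactor_self (hc : ‖c‖ < 1) :
    HasDerivAt (blaschkeFactor c) ((1 - ‖c‖ ^ 2 : ℝ) : ℂ)⁻¹ c := by
  convert hasDerivAt_blaschkeFactor hc hc using 1
  have : (1 : ℂ) - conj c * c ≠ 0 := one_sub_conj_mul_ne_zero hc hc
  rw [conj_mul'] at this ⊢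
  push_cast
  field_simp

end BlaschkeFactor

theorem norm_deriv_le_one_sub_sq_of_mapsTo_ball {H : ℂ → ℂ}
    (hd : DifferentiableOn ℂ H (ball 0 1)) (hH : MapsTo H (ball 0 1) (ball 0 1)) :
    ‖deriv H 0‖ ≤ 1 - ‖H 0‖ ^ 2 := by
  have hc : ‖H 0‖ < 1 := mem_ball_zero_iff.1 (hH (mem_ball_self one_pos))
  have hpos : 0 < 1 - ‖H 0‖ ^ 2 := by nlinarith [norm_nonneg (H 0)]
  set g := blaschkeFactor (H 0) ∘ H
  have hgd : DifferentiableOn ℂ g (ball 0 1) := fun z hz =>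
    (hasDerivAt_blaschkeFactor hc (mem_ball_zero_iff.1 (hH hz))).differentiableAt
      |>.comp_differentiableWithinAt z (hd z hz)
  have hg : MapsTo g (ball 0 1) (closedBall (g 0) 1) := fun z hz => by
    show dist (blaschkeFactor (H 0) (H z)) (blaschkeFactor (H 0) (H 0)) ≤ 1
    rw [blaschkeFactor_self, dist_zero_right]
    exact (norm_blaschkeFactor_lt_one hc (mem_ball_zero_iff.1 (hH hz))).le
  have hschwarz : ‖deriv g 0‖ ≤ 1 := by
    simpa using Complex.norm_deriv_le_div_of_mapsTo_ball hgd hg one_pos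
  have hchain : deriv g 0 = ((1 - ‖H 0‖ ^ 2 : ℝ) : ℂ)⁻¹ * deriv H 0 :=
    ((hasDerivAt_blaschkeFactor_self hc).comp 0
      (hd.differentiableAt (ball_mem_nhds 0 one_pos)).hasDerivAt).deriv
  rwa [hchain, norm_mul, norm_inv, norm_real, Real.norm_of_nonneg hpos.le,
    inv_mul_le_iff₀ hpos, mul_one] at hschwarz

theorem norm_deriv_le_one_sub_sq_of_mapsTo_closedBall {H : ℂ → ℂ}
    (hd : DifferentiableOn ℂ H (ball 0 1)) (hH : MapsTo H (ball 0 1) (closedBall 0 1)) :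
    ‖deriv H 0‖ ≤ 1 - ‖H 0‖ ^ 2 := by
  have hscaled : ∀ t ∈ Ioo (0 : ℝ) 1, t * ‖deriv H 0‖ ≤ 1 - t ^ 2 * ‖H 0‖ ^ 2 := by
    rintro t ⟨ht0, ht1⟩
    have hmaps : MapsTo (fun z => (t : ℂ) * H z) (ball 0 1) (ball 0 1) := fun z hz => by
      have := mem_closedBall_zero_iff.1 (hH hz)
      rw [mem_ball_zero_iff, norm_mul, norm_real, Real.norm_of_nonneg ht0.le]
      nlinarith
    have := norm_deriv_le_one_sub_sq_of_mapsTo_ball (hd.const_mul _) hmaps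
    rwa [deriv_const_mul _ (hd.differentiableAt (ball_mem_nhds 0 one_pos)), norm_mul, norm_mul,
      norm_real, Real.norm_of_nonneg ht0.le, mul_pow] at this
  have hone : (1 : ℝ) ∈ closure (Ioo 0 1) := by
    rw [closure_Ioo zero_ne_one]
    exact right_mem_Icc.2 zero_le_one
  simpa using le_on_closure hscaled (by fun_prop) (by fun_prop) hone

theorem hasFPowerSeriesOnBall_ofScalars_of_hasSum {b : ℕ → ℂ} {H : ℂ → ℂ}
    (hH : ∀ w : ℂ, ‖w‖ < 1 → HasSum (fun m => b m * w ^ m) (H w)) :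
    HasFPowerSeriesOnBall H (ofScalars ℂ b) 0 1 where
  r_le := by
    refine ENNReal.le_of_forall_nnreal_lt fun r hr =>
      (ofScalars ℂ b).le_radius_of_tendsto (l := 0) ?_
    have hr1 : ‖(r : ℂ)‖ < 1 := by simpa using hr
    simpa [ofScalars_norm] using (hH r hr1).summable.tendsto_atTop_zero.norm
  r_pos := one_pos
  hasSum {y} hy := by
    rw [← ENNReal.ofReal_one, eball_ofReal, mem_ball_zero_iff] at hy
    simpa [ofScalars_apply_eq, mul_comm] using hH y hy

theorem norm_coeff_one_le_one_sub_sq {b : ℕ → ℂ} {H : ℂ → ℂ}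
    (hH : ∀ w : ℂ, ‖w‖ < 1 → HasSum (fun m => b m * w ^ m) (H w))
    (hbound : ∀ w : ℂ, ‖w‖ < 1 → ‖H w‖ ≤ 1) :
    ‖b 1‖ ≤ 1 - ‖b 0‖ ^ 2 := by
  have hps := hasFPowerSeriesOnBall_ofScalars_of_hasSum hH
  have hH0 : H 0 = b 0 := by simpa using (hps.coeff_zero fun _ => 0).symm
  have hH'0 : deriv H 0 = b 1 := by simp [hps.hasFPowerSeriesAt.deriv]
  have hd : DifferentiableOn ℂ H (ball 0 1) := by
    simpa [← ENNReal.ofReal_one, eball_ofReal] using hps.differentiableOn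
  rw [← hH0, ← hH'0]
  exact norm_deriv_le_one_sub_sq_of_mapsTo_closedBall hd fun w hw =>
    mem_closedBall_zero_iff.2 (hbound w (mem_ball_zero_iff.1 hw))

theorem IsPrimitiveRoot.sum_range_pow_pow {R : Type*} [CommRing R] [IsDomain R] {ω : R} {n : ℕ}
    (hω : IsPrimitiveRoot ω n) (s : ℕ) :
    ∑ k ∈ range n, (ω ^ s) ^ k = if n ∣ s then (n : R) else 0 := by
  split_ifs with hs
  · simp [(hω.pow_eq_one_iff_dvd s).2 hs]
  · have hne : ω ^ s - 1 ≠ 0 := sub_ne_zero.2 fun h => hs ((hω.pow_eq_one_iff_dvd s).1 h)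
    have hgeom := geom_sum_mul (ω ^ s) n
    rw [← pow_mul, mul_comm s n, pow_mul, hω.pow_eq_one, one_pow, sub_self] at hgeom
    exact (mul_eq_zero.1 hgeom).resolve_right hne

theorem hasSum_lacunary_of_hasSum_rotations {a : ℕ → ℂ} {f : ℂ → ℂ} {ω z : ℂ} {n : ℕ} (hn : 0 < n)
    (hω : IsPrimitiveRoot ω n)
    (hsum : ∀ k, HasSum (fun s => a s * (ω ^ k * z) ^ s) (f (ω ^ k * z))) :
    HasSum (fun m => a (n * m) * (z ^ n) ^ m) ((n : ℂ)⁻¹ * ∑ k ∈ range n, f (ω ^ k * z)) := by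
  have havg : HasSum (fun s => (n : ℂ)⁻¹ * ∑ k ∈ range n, a s * (ω ^ k * z) ^ s)
      ((n : ℂ)⁻¹ * ∑ k ∈ range n, f (ω ^ k * z)) :=
    (hasSum_sum fun k _ => hsum k).mul_left _
  have hfilter : (fun s => (n : ℂ)⁻¹ * ∑ k ∈ range n, a s * (ω ^ k * z) ^ s)
      = fun s => if n ∣ s then a s * z ^ s else 0 := by
    ext s
    simp_rw [mul_pow, ← pow_mul, mul_comm _ s, pow_mul, mul_left_comm (a s), ← sum_mul,
      hω.sum_range_pow_pow s]
    have : (n : ℂ) ≠ 0 := Nat.cast_ne_zero.2 hn.ne'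
    split_ifs
    · field_simp
    · simp
  rw [hfilter, ← (mul_right_injective₀ hn.ne').hasSum_iff] at havg
  · simpa [Function.comp_def, pow_mul] using havg
  · rintro s hs
    rw [if_neg]
    rintro ⟨m, rfl⟩
    exact hs ⟨m, rfl⟩

theorem norm_coeff_le_one_sub_norm_coeff_zero_sq {a : ℕ → ℂ} {f : ℂ → ℂ}
    (hsum : ∀ z : ℂ, ‖z‖ < 1 → HasSum (fun s => a s * z ^ s) (f z))
    (hb : ∀ z : ℂ, ‖z‖ < 1 → ‖f z‖ ≤ 1) {n : ℕ} (hn : 0 < n) :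
    ‖a n‖ ≤ 1 - ‖a 0‖ ^ 2 := by
  obtain ⟨ω, hω⟩ : ∃ ω : ℂ, IsPrimitiveRoot ω n := ⟨_, isPrimitiveRoot_exp n hn.ne'⟩
  have hlacunary : ∀ w : ℂ, ‖w‖ < 1 → HasSum (fun m => a (n * m) * w ^ m)
      (∑' m, a (n * m) * w ^ m) ∧ ‖∑' m, a (n * m) * w ^ m‖ ≤ 1 := by
    intro w hw
    obtain ⟨z, rfl⟩ := IsAlgClosed.exists_pow_nat_eq w hn
    have hωz : ∀ k, ‖ω ^ k * z‖ < 1 := fun k => by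
      rw [norm_pow] at hw
      rw [norm_mul, norm_pow, hω.norm'_eq_one hn.ne', one_pow, one_mul]
      exact (pow_lt_one_iff_of_nonneg (norm_nonneg z) hn.ne').1 hw
    have hS := hasSum_lacunary_of_hasSum_rotations hn hω fun k => hsum _ (hωz k)
    refine ⟨hS.summable.hasSum, ?_⟩
    rw [hS.tsum_eq, norm_mul, norm_inv, norm_natCast, inv_mul_le_iff₀ (by positivity), mul_one]
    calc ‖∑ k ∈ range n, f (ω ^ k * z)‖ ≤ ∑ k ∈ range n, ‖f (ω ^ k * z)‖ := norm_sum_le _ _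
      _ ≤ ∑ k ∈ range n, 1 := sum_le_sum fun k _ => hb _ (hωz k)
      _ = n := by simp
  simpa using norm_coeff_one_le_one_sub_sq (fun w hw => (hlacunary w hw).1)
    (fun w hw => (hlacunary w hw).2)

theorem tsum_mul_pow_le {u : ℕ → ℝ} {K r : ℝ} (hu : ∀ s, 0 ≤ u s) (hK : ∀ s, u (s + 1) ≤ K)
    (hr0 : 0 ≤ r) (hr1 : r < 1) :
    ∑' s, u s * r ^ s ≤ u 0 + K * (r / (1 - r)) := by
  have hgeom : Summable fun s => K * r * r ^ s :=
    (summable_geometric_of_lt_one hr0 hr1).mul_left _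
  have htail_le : ∀ s, u (s + 1) * r ^ (s + 1) ≤ K * r * r ^ s := fun s => by
    rw [pow_succ, mul_comm (r ^ s), ← mul_assoc]
    exact mul_le_mul_of_nonneg_right (mul_le_mul_of_nonneg_right (hK s) hr0) (by positivity)
  have htail : Summable fun s => u (s + 1) * r ^ (s + 1) :=
    .of_nonneg_of_le (fun s => mul_nonneg (hu _) (by positivity)) htail_le hgeom
  rw [((summable_nat_add_iff (f := fun s => u s * r ^ s) 1).1 htail).tsum_eq_zero_add,
    pow_zero, mul_one]
  gcongr _ + ?_
  calc ∑' s, u (s + 1) * r ^ (s + 1) ≤ ∑' s, K * r * r ^ s := htail.tsum_le_tsum htail_le hgeom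
    _ = K * (r / (1 - r)) := by
      rw [tsum_mul_left, tsum_geometric_of_lt_one hr0 hr1]
      ring

theorem stmt_5 (f : ℂ → ℂ) (a : ℕ → ℂ)
    (hsum : ∀ z : ℂ, ‖z‖ < 1 → HasSum (fun s : ℕ => a s * z ^ s) (f z))
    (hb : ∀ z : ℂ, ‖z‖ < 1 → ‖f z‖ ≤ 1) :
    ∀ r : ℝ, 0 ≤ r → r ≤ 1 / 3 → ∑' s : ℕ, ‖a s‖ * r ^ s ≤ 1 := by
  intro r hr0 hr13
  have hwiener : ∀ s, 0 < s → ‖a s‖ ≤ 1 - ‖a 0‖ ^ 2 := fun s hs =>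
    norm_coeff_le_one_sub_norm_coeff_zero_sq hsum hb hs
  have hK : 0 ≤ 1 - ‖a 0‖ ^ 2 := (norm_nonneg _).trans (hwiener 1 one_pos)
  have hr : r / (1 - r) ≤ 1 / 2 := by
    rw [div_le_iff₀ (by linarith)]
    linarith
  calc ∑' s, ‖a s‖ * r ^ s ≤ ‖a 0‖ + (1 - ‖a 0‖ ^ 2) * (r / (1 - r)) :=
        tsum_mul_pow_le (fun s => norm_nonneg _) (fun s => hwiener (s + 1) s.succ_pos) hr0
          (by linarith)
    _ ≤ ‖a 0‖ + (1 - ‖a 0‖ ^ 2) * (1 / 2) := by gcongr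
    _ ≤ 1 := by nlinarith [sq_nonneg (1 - ‖a 0‖)]
end

section
/- Let b ∈ [0,1), p ∈ (0,1], N ≥ 1, and d₁,…,d_N ≥ 0 satisfy 8d₁M_p² + 6c₂d₂M_p⁴ + ⋯ + 2(2N-1)c_N d_N M_p^{2N} ≤ p, where M_p = p(2+p)/(4p+4) and c_s = max_{t∈[0,1]} t(1+t)²(1-t²)^{2s-2} for s ≥ 2 (with c₁ interpreted via the bound b(1+b)² ≤ 4). Then Φ(b) := p + 2·Σ_{s=1}^{N} d_s (1-b²)^{2s-1} M_p^{2s} - 2p/(1+b) ≤ 0 for all b ∈ [0,1]. -/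
/-!
Since `Φ(1) = 0`, it suffices that `Φ` is nondecreasing on `[0,1]`. Multiplying `Φ'(x)` by
`(1+x)²` gives `2 (p - ∑ₛ 2(2s-1) dₛ M^{2s} · x(1+x)²(1-x²)^{2s-2})`, and on `[0,1]` the profile
`x(1+x)²(1-x²)^{2s-2}` is at most `4` for `s = 1` and at most `cₛ` for `s ≥ 2`, so the coefficient
condition makes `Φ'` nonnegative.
-/

noncomputable section

variable (p M : ℝ) (d : ℕ → ℝ) (N : ℕ)

def phi (b : ℝ) : ℝ :=
  p + 2 * (∑ s ∈ Finset.Icc 1 N, d s * (1 - b ^ 2) ^ (2 * s - 1) * M ^ (2 * s)) - 2 * p / (1 + b)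

def phiDeriv (x : ℝ) : ℝ :=
  2 * p / (1 + x) ^ 2
    - 2 * ∑ s ∈ Finset.Icc 1 N,
        2 * (2 * (s : ℝ) - 1) * d s * (x * (1 - x ^ 2) ^ (2 * s - 2)) * M ^ (2 * s)

theorem hasDerivAt_one_sub_sq_pow {s : ℕ} (hs : 1 ≤ s) (x : ℝ) :
    HasDerivAt (fun x : ℝ => (1 - x ^ 2) ^ (2 * s - 1))
      (-(2 * (2 * (s : ℝ) - 1) * (x * (1 - x ^ 2) ^ (2 * s - 2)))) x := by
  have hbase : HasDerivAt (fun x : ℝ => 1 - x ^ 2) (-(2 * x)) x := by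
    simpa using (hasDerivAt_pow 2 x).const_sub 1
  refine (hbase.pow (2 * s - 1)).congr_deriv ?_
  rw [show 2 * s - 1 - 1 = 2 * s - 2 by omega, Nat.cast_sub (by omega)]
  push_cast
  ring

theorem hasDerivAt_phi {x : ℝ} (hx : -1 < x) :
    HasDerivAt (phi p M d N) (phiDeriv p M d N x) x := by
  have hsum : HasDerivAt
      (fun x : ℝ => ∑ s ∈ Finset.Icc 1 N, d s * (1 - x ^ 2) ^ (2 * s - 1) * M ^ (2 * s))
      (∑ s ∈ Finset.Icc 1 N,
        d s * -(2 * (2 * (s : ℝ) - 1) * (x * (1 - x ^ 2) ^ (2 * s - 2))) * M ^ (2 * s)) x :=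
    HasDerivAt.fun_sum fun s hs =>
      ((hasDerivAt_one_sub_sq_pow (Finset.mem_Icc.mp hs).1 x).const_mul (d s)).mul_const _
  have hinv := (hasDerivAt_const x (2 * p)).div ((hasDerivAt_id x).const_add 1)
    (ne_of_gt (by linarith : (0 : ℝ) < 1 + x))
  refine (((hsum.const_mul 2).const_add p).sub hinv).congr_deriv ?_
  have hterm : ∀ s : ℕ,
      2 * (d s * -(2 * (2 * (s : ℝ) - 1) * (x * (1 - x ^ 2) ^ (2 * s - 2))) * M ^ (2 * s))
        = -(2 * (2 * (2 * (s : ℝ) - 1) * d s * (x * (1 - x ^ 2) ^ (2 * s - 2)) * M ^ (2 * s))) :=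
    fun s => by ring
  simp only [phiDeriv, Finset.mul_sum, id, hterm, Finset.sum_neg_distrib]
  ring

theorem phi_one : phi p M d N 1 = 0 := by
  have hzero : ∀ s ∈ Finset.Icc 1 N, d s * ((1 : ℝ) - 1 ^ 2) ^ (2 * s - 1) * M ^ (2 * s) = 0 := by
    intro s hs
    rw [one_pow, sub_self, zero_pow (by have := (Finset.mem_Icc.mp hs).1; omega)]
    ring
  rw [phi, Finset.sum_eq_zero hzero]
  ring

theorem sum_mul_profile_le (hN : 1 ≤ N) (hd : ∀ s, 0 ≤ d s) (c : ℕ → ℝ) {x : ℝ}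
    (hx : x ∈ Set.Icc (0 : ℝ) 1)
    (hc : ∀ s ∈ Finset.Icc 2 N, x * (1 + x) ^ 2 * (1 - x ^ 2) ^ (2 * s - 2) ≤ c s) :
    ∑ s ∈ Finset.Icc 1 N,
        2 * (2 * (s : ℝ) - 1) * d s * (x * (1 + x) ^ 2 * (1 - x ^ 2) ^ (2 * s - 2)) * M ^ (2 * s)
      ≤ 8 * d 1 * M ^ 2 + ∑ s ∈ Finset.Icc 2 N, 2 * (2 * (s : ℝ) - 1) * c s * d s * M ^ (2 * s) := by
  obtain ⟨hx0, hx1⟩ := hx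
  have hsplit : Finset.Icc 1 N = insert 1 (Finset.Icc 2 N) := by
    ext k
    simp only [Finset.mem_Icc, Finset.mem_insert]
    omega
  rw [hsplit, Finset.sum_insert (by simp)]
  refine add_le_add ?_ (Finset.sum_le_sum fun s hs => ?_)
  · have hprofile : x * (1 + x) ^ 2 ≤ 4 := by nlinarith
    have := mul_le_mul_of_nonneg_left hprofile (mul_nonneg (hd 1) (sq_nonneg M))
    norm_num
    linarith
  · have hcoef : 0 ≤ 2 * (2 * (s : ℝ) - 1) * d s * M ^ (2 * s) := by
      have : (2 : ℝ) ≤ s := by exact_mod_cast (Finset.mem_Icc.mp hs).1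
      exact mul_nonneg (mul_nonneg (by linarith) (hd s)) (by rw [pow_mul]; positivity)
    nlinarith [mul_le_mul_of_nonneg_left (hc s hs) hcoef]

theorem phiDeriv_nonneg {x : ℝ} (hx : 0 ≤ x)
    (hbound : ∑ s ∈ Finset.Icc 1 N,
        2 * (2 * (s : ℝ) - 1) * d s * (x * (1 + x) ^ 2 * (1 - x ^ 2) ^ (2 * s - 2)) * M ^ (2 * s)
      ≤ p) :
    0 ≤ phiDeriv p M d N x := by
  have hpos : (0 : ℝ) < (1 + x) ^ 2 := by positivity
  have hscaled : (1 + x) ^ 2 * phiDeriv p M d N x = 2 * (p - ∑ s ∈ Finset.Icc 1 N,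
      2 * (2 * (s : ℝ) - 1) * d s * (x * (1 + x) ^ 2 * (1 - x ^ 2) ^ (2 * s - 2)) * M ^ (2 * s)) := by
    rw [phiDeriv, mul_sub, mul_div_cancel₀ _ hpos.ne', mul_sub]
    simp only [Finset.mul_sum]
    congr 1
    exact Finset.sum_congr rfl fun s _ => by ring
  nlinarith

end

theorem stmt_12_general (p : ℝ) (N : ℕ) (hN : 1 ≤ N)
    (d : ℕ → ℝ) (hd : ∀ s, 0 ≤ d s)
    (M : ℝ)
    (c : ℕ → ℝ)
    (hc : ∀ s : ℕ, 2 ≤ s →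
      IsGreatest ((fun t : ℝ => t * (1 + t) ^ 2 * (1 - t ^ 2) ^ (2 * s - 2)) '' Set.Icc 0 1) (c s))
    (hcoef : 8 * d 1 * M ^ 2 +
      (∑ s ∈ Finset.Icc 2 N, 2 * (2 * (s : ℝ) - 1) * c s * d s * M ^ (2 * s)) ≤ p) :
    ∀ b ∈ Set.Icc (0 : ℝ) 1,
      p + 2 * (∑ s ∈ Finset.Icc 1 N, d s * (1 - b ^ 2) ^ (2 * s - 1) * M ^ (2 * s))
        - 2 * p / (1 + b) ≤ 0 := by
  intro b hb
  have hderiv : ∀ x ∈ Set.Icc (0 : ℝ) 1, HasDerivAt (phi p M d N) (phiDeriv p M d N x) x :=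
    fun x hx => hasDerivAt_phi p M d N (by linarith [hx.1])
  have hmono : MonotoneOn (phi p M d N) (Set.Icc 0 1) := by
    refine monotoneOn_of_hasDerivWithinAt_nonneg (convex_Icc 0 1)
      (fun x hx => (hderiv x hx).continuousAt.continuousWithinAt)
      (fun x hx => (hderiv x (interior_subset hx)).hasDerivWithinAt) fun x hx => ?_
    have hx := interior_subset hx
    refine phiDeriv_nonneg p M d N hx.1 ((sum_mul_profile_le M d N hN hd c hx ?_).trans hcoef)
    exact fun s hs => (hc s (Finset.mem_Icc.mp hs).1).2 ⟨x, hx, rfl⟩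
  have := hmono hb (Set.right_mem_Icc.mpr zero_le_one) hb.2
  rwa [phi_one] at this

theorem stmt_12 (p : ℝ) (hp0 : 0 < p) (hp1 : p ≤ 1) (N : ℕ) (hN : 1 ≤ N)
    (d : ℕ → ℝ) (hd : ∀ s, 0 ≤ d s)
    (M : ℝ) (hM : M = p * (2 + p) / (4 * p + 4))
    (c : ℕ → ℝ)
    (hc : ∀ s : ℕ, 2 ≤ s →
      IsGreatest ((fun t : ℝ => t * (1 + t) ^ 2 * (1 - t ^ 2) ^ (2 * s - 2)) '' Set.Icc 0 1) (c s))
    (hcoef : 8 * d 1 * M ^ 2 +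
      (∑ s ∈ Finset.Icc 2 N, 2 * (2 * (s : ℝ) - 1) * c s * d s * M ^ (2 * s)) ≤ p) :
    ∀ b ∈ Set.Icc (0 : ℝ) 1,
      p + 2 * (∑ s ∈ Finset.Icc 1 N, d s * (1 - b ^ 2) ^ (2 * s - 1) * M ^ (2 * s))
        - 2 * p / (1 + b) ≤ 0 :=
  stmt_12_general p N hN d hd M c hc hcoef
end

section
/- Let p ∈ (0,2], b ∈ [0,1), m₁ ≥ 1 an integer, and r ∈ (0,1) with r ≤ R₂(p), where R₂(p) ∈ (0,1) is the root of r/(1-r) + r^{m₁}/(1-r^{m₁}) = p/2. Then b^p + (1-b²)·r/(1-r) + (1-b²)·r^{m₁}/(1-r^{m₁}) ≤ 1. -/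
/-!
Writing `b ^ p = (b ^ 2) ^ (p / 2)` with `p / 2 ∈ [0, 1]`, Bernoulli's inequality gives
`b ^ p ≤ 1 - (p / 2) (1 - b ^ 2)`. Since `x ↦ x / (1 - x)` is increasing on `(-∞, 1)`, the sum
`r / (1 - r) + r ^ m₁ / (1 - r ^ m₁)` is increasing in `r`, hence at most its value `p / 2` at `R`.
-/

lemma rpow_le_one_sub_mul_one_sub_sq {p b : ℝ} (hp0 : 0 ≤ p) (hp2 : p ≤ 2) (hb : 0 ≤ b) :
    b ^ p ≤ 1 - p / 2 * (1 - b ^ 2) := by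
  have hsq : b ^ p = (1 + (b ^ 2 - 1)) ^ (p / 2) := by
    rw [add_sub_cancel, ← Real.rpow_natCast, ← Real.rpow_mul hb]
    ring_nf
  rw [hsq]
  linarith [rpow_one_add_le_one_add_mul_self (by nlinarith : -1 ≤ b ^ 2 - 1)
    (by linarith : 0 ≤ p / 2) (by linarith : p / 2 ≤ 1)]

lemma div_one_sub_le_div_one_sub {x y : ℝ} (hxy : x ≤ y) (hy : y < 1) :
    x / (1 - x) ≤ y / (1 - y) := by
  rw [div_le_div_iff₀ (by linarith) (by linarith)]
  nlinarith

lemma div_one_sub_add_pow_div_one_sub_pow_le {r R : ℝ} {m : ℕ} (hm : m ≠ 0) (hr : 0 ≤ r)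
    (hrR : r ≤ R) (hR : R < 1) :
    r / (1 - r) + r ^ m / (1 - r ^ m) ≤ R / (1 - R) + R ^ m / (1 - R ^ m) :=
  add_le_add (div_one_sub_le_div_one_sub hrR hR)
    (div_one_sub_le_div_one_sub (pow_le_pow_left₀ hr hrR m)
      (pow_lt_one₀ (hr.trans hrR) hR hm))

theorem stmt_15 (p : ℝ) (hp0 : 0 < p) (hp2 : p ≤ 2) (b : ℝ) (hb0 : 0 ≤ b) (hb1 : b < 1)
    (m₁ : ℕ) (hm : 1 ≤ m₁) (R r : ℝ) (hR : R ∈ Set.Ioo (0 : ℝ) 1)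
    (hRroot : R / (1 - R) + R ^ m₁ / (1 - R ^ m₁) = p / 2)
    (hr : r ∈ Set.Ioo (0 : ℝ) 1) (hrR : r ≤ R) :
    b ^ p + (1 - b ^ 2) * r / (1 - r) + (1 - b ^ 2) * r ^ m₁ / (1 - r ^ m₁) ≤ 1 := by
  have hsum : r / (1 - r) + r ^ m₁ / (1 - r ^ m₁) ≤ p / 2 :=
    hRroot ▸ div_one_sub_add_pow_div_one_sub_pow_le (by omega) hr.1.le hrR hR.2
  have hweight : 0 ≤ 1 - b ^ 2 := by nlinarith
  calc b ^ p + (1 - b ^ 2) * r / (1 - r) + (1 - b ^ 2) * r ^ m₁ / (1 - r ^ m₁)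
      = b ^ p + (1 - b ^ 2) * (r / (1 - r) + r ^ m₁ / (1 - r ^ m₁)) := by ring
    _ ≤ 1 - p / 2 * (1 - b ^ 2) + (1 - b ^ 2) * (p / 2) :=
        add_le_add (rpow_le_one_sub_mul_one_sub_sq hp0.le hp2 hb0)
          (mul_le_mul_of_nonneg_left hsum hweight)
    _ = 1 := by ring
end

section
/- Let p ∈ (0,2], q ≥ 1, m ≥ 0, m₁, m₂ ≥ 1 integers, μ, ν ≥ 0 with μ+ν > 0, b ∈ [0,1), and r ∈ (0,1). If 2μ·r^{q+m}/(1-r^q) + 2ν·r^{m₂}/(1-r^{m₂}) ≤ p·(1-r^{m₁})/(1+r^{m₁}), then ((b + r^{m₁})/(1 + b r^{m₁}))^p + μ(1-b²)·r^{q+m}/(1-r^q) + ν(1-b²)·r^{m₂}/(1-r^{m₂}) ≤ 1. -/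
/-!
Write `t = r ^ m₁` and `X = (b + t) / (1 + b t)`. Bernoulli's inequality for the exponent `p / 2 ∈ [0, 1]`
gives `X ^ p ≤ 1 - (p / 2) (1 - X ^ 2)`, and the identity `1 - X ^ 2 = (1 - b²)(1 - t²) / (1 + b t)²`
together with `1 + b t ≤ 1 + t` gives `1 - X ^ 2 ≥ (1 - b²)(1 - t) / (1 + t)`. Hence
`X ^ p + (1 - b²) S ≤ 1` whenever `2 S ≤ p (1 - t) / (1 + t)`, which is the hypothesis with
`S = μ r^(q+m) / (1 - r^q) + ν r^m₂ / (1 - r^m₂)`.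
-/

lemma rpow_le_one_sub_half_mul_one_sub_sq {x p : ℝ} (hx0 : 0 ≤ x) (hp0 : 0 ≤ p)
    (hp2 : p ≤ 2) : x ^ p ≤ 1 - p / 2 * (1 - x ^ 2) := by
  have hbern := rpow_one_add_le_one_add_mul_self (by nlinarith : (-1 : ℝ) ≤ x ^ 2 - 1)
    (p := p / 2) (by positivity) (by linarith)
  have hsq : ((x ^ 2 : ℝ) ^ (p / 2)) = x ^ p := by
    rw [← Real.rpow_natCast x 2, ← Real.rpow_mul hx0]
    ring_nf
  rw [add_sub_cancel, hsq] at hbern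
  linarith

section Mobius

variable {b t : ℝ}

lemma one_sub_sq_add_div_one_add_mul (hbt : 1 + b * t ≠ 0) :
    1 - ((b + t) / (1 + b * t)) ^ 2 = (1 - b ^ 2) * (1 - t ^ 2) / (1 + b * t) ^ 2 := by
  field_simp
  ring

lemma one_sub_sq_mul_div_le_one_sub_sq_add_div (hb0 : 0 ≤ b) (hb1 : b ≤ 1) (ht0 : 0 ≤ t)
    (ht1 : t ≤ 1) :
    (1 - b ^ 2) * ((1 - t) / (1 + t)) ≤ 1 - ((b + t) / (1 + b * t)) ^ 2 := by
  have hbt : 0 < 1 + b * t := by positivity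
  rw [one_sub_sq_add_div_one_add_mul hbt.ne', ← mul_div_assoc,
    div_le_div_iff₀ (by positivity) (by positivity)]
  have hb : 0 ≤ 1 - b ^ 2 := by nlinarith
  have hden : (1 + b * t) ^ 2 ≤ (1 + t) ^ 2 := by
    gcongr
    nlinarith
  calc (1 - b ^ 2) * (1 - t) * (1 + b * t) ^ 2
      ≤ (1 - b ^ 2) * (1 - t) * (1 + t) ^ 2 := by gcongr
    _ = (1 - b ^ 2) * (1 - t ^ 2) * (1 + t) := by ring

lemma add_div_one_add_mul_rpow_add_le_one {p : ℝ} (hp0 : 0 ≤ p) (hp2 : p ≤ 2) (hb0 : 0 ≤ b)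
    (hb1 : b ≤ 1) (ht0 : 0 ≤ t) (ht1 : t ≤ 1) :
    ((b + t) / (1 + b * t)) ^ p + (1 - b ^ 2) * (p / 2 * ((1 - t) / (1 + t))) ≤ 1 := by
  have hX := rpow_le_one_sub_half_mul_one_sub_sq (by positivity : 0 ≤ (b + t) / (1 + b * t))
    hp0 hp2
  have hsq := one_sub_sq_mul_div_le_one_sub_sq_add_div hb0 hb1 ht0 ht1
  have hp : 0 ≤ p / 2 := by positivity
  nlinarith [mul_le_mul_of_nonneg_left hsq hp]

end Mobius

theorem stmt_16_general (p : ℝ) (hp0 : 0 < p) (hp2 : p ≤ 2) (q m m₁ m₂ : ℕ)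
    (μ ν : ℝ)
    (b : ℝ) (hb0 : 0 ≤ b) (hb1 : b < 1) (r : ℝ) (hr0 : 0 < r) (hr1 : r < 1)
    (hroot : 2 * μ * r ^ (q + m) / (1 - r ^ q) + 2 * ν * r ^ m₂ / (1 - r ^ m₂) ≤
      p * ((1 - r ^ m₁) / (1 + r ^ m₁))) :
    ((b + r ^ m₁) / (1 + b * r ^ m₁)) ^ p +
      μ * (1 - b ^ 2) * r ^ (q + m) / (1 - r ^ q) +
      ν * (1 - b ^ 2) * r ^ m₂ / (1 - r ^ m₂) ≤ 1 := by
  set t := r ^ m₁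
  set S := μ * r ^ (q + m) / (1 - r ^ q) + ν * r ^ m₂ / (1 - r ^ m₂)
  have ht0 : 0 ≤ t := by positivity
  have ht1 : t ≤ 1 := pow_le_one₀ hr0.le hr1.le
  have hS : S ≤ p / 2 * ((1 - t) / (1 + t)) := by
    have : 2 * S = 2 * μ * r ^ (q + m) / (1 - r ^ q) + 2 * ν * r ^ m₂ / (1 - r ^ m₂) := by ring
    linarith
  have hb : 0 ≤ 1 - b ^ 2 := by nlinarith
  calc ((b + t) / (1 + b * t)) ^ p + μ * (1 - b ^ 2) * r ^ (q + m) / (1 - r ^ q) +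
        ν * (1 - b ^ 2) * r ^ m₂ / (1 - r ^ m₂)
      = ((b + t) / (1 + b * t)) ^ p + (1 - b ^ 2) * S := by ring
    _ ≤ ((b + t) / (1 + b * t)) ^ p + (1 - b ^ 2) * (p / 2 * ((1 - t) / (1 + t))) := by gcongr
    _ ≤ 1 := add_div_one_add_mul_rpow_add_le_one hp0.le hp2 hb0 hb1.le ht0 ht1

theorem stmt_16 (p : ℝ) (hp0 : 0 < p) (hp2 : p ≤ 2) (q m m₁ m₂ : ℕ)
    (hq : 1 ≤ q) (hm₁ : 1 ≤ m₁) (hm₂ : 1 ≤ m₂)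
    (μ ν : ℝ) (hμ : 0 ≤ μ) (hν : 0 ≤ ν) (hμν : 0 < μ + ν)
    (b : ℝ) (hb0 : 0 ≤ b) (hb1 : b < 1) (r : ℝ) (hr0 : 0 < r) (hr1 : r < 1)
    (hroot : 2 * μ * r ^ (q + m) / (1 - r ^ q) + 2 * ν * r ^ m₂ / (1 - r ^ m₂) ≤
      p * ((1 - r ^ m₁) / (1 + r ^ m₁))) :
    ((b + r ^ m₁) / (1 + b * r ^ m₁)) ^ p +
      μ * (1 - b ^ 2) * r ^ (q + m) / (1 - r ^ q) +
      ν * (1 - b ^ 2) * r ^ m₂ / (1 - r ^ m₂) ≤ 1 :=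
  stmt_16_general p hp0 hp2 q m m₁ m₂ μ ν b hb0 hb1 r hr0 hr1 hroot
end

section
/- For p ∈ (0,2], b ∈ [0,1), and t ∈ [0,1): 1 - ((b+t)/(1+bt))^p ≥ (p/2)·(1-b²)·(1-t)/(1+t). -/
/-!
Write `x = (b + t) / (1 + b t)`. Since `p / 2 ∈ (0, 1]`, Bernoulli's inequality for the concave
power `s ↦ s ^ (p / 2)` gives `x ^ p = (x ^ 2) ^ (p / 2) ≤ 1 - (p / 2) (1 - x ^ 2)`, and the
Möbius identity `1 - x ^ 2 = (1 - b ^ 2) (1 - t ^ 2) / (1 + b t) ^ 2` together with `1 + b t ≤ 1 + t`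
bounds `1 - x ^ 2` below by `(1 - b ^ 2) (1 - t) / (1 + t)`.
-/

open Real

theorem Real.rpow_le_one_add_half_mul_sq_sub_one {x p : ℝ} (hx : 0 ≤ x) (hp0 : 0 ≤ p)
    (hp2 : p ≤ 2) : x ^ p ≤ 1 + p / 2 * (x ^ 2 - 1) :=
  calc x ^ p = (1 + (x ^ 2 - 1)) ^ (p / 2) := by
        rw [add_sub_cancel, ← rpow_natCast, ← rpow_mul hx, Nat.cast_ofNat,
          mul_div_cancel₀ p two_ne_zero]
    _ ≤ 1 + p / 2 * (x ^ 2 - 1) :=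
        rpow_one_add_le_one_add_mul_self (by nlinarith) (by linarith) (by linarith)

theorem one_sub_sq_div_one_add_mul {b t : ℝ} (h : 1 + b * t ≠ 0) :
    1 - ((b + t) / (1 + b * t)) ^ 2 = (1 - b ^ 2) * (1 - t ^ 2) / (1 + b * t) ^ 2 := by
  field_simp
  ring

theorem one_sub_div_one_add_le_one_sub_sq_div {b t : ℝ} (hb0 : 0 ≤ b) (hb1 : b ≤ 1)
    (ht0 : 0 ≤ t) (ht1 : t ≤ 1) : (1 - t) / (1 + t) ≤ (1 - t ^ 2) / (1 + b * t) ^ 2 :=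
  calc (1 - t) / (1 + t) = (1 - t ^ 2) / (1 + t) ^ 2 := by
        field_simp
        ring
    _ ≤ (1 - t ^ 2) / (1 + b * t) ^ 2 := by
        gcongr
        · nlinarith
        · nlinarith

theorem stmt_17 (p : ℝ) (hp0 : 0 < p) (hp2 : p ≤ 2) (b t : ℝ)
    (hb0 : 0 ≤ b) (hb1 : b < 1) (ht0 : 0 ≤ t) (ht1 : t < 1) :
    1 - ((b + t) / (1 + b * t)) ^ p ≥ p / 2 * (1 - b ^ 2) * ((1 - t) / (1 + t)) := by
  have hbt : 0 < 1 + b * t := by positivity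
  have hbern := rpow_le_one_add_half_mul_sq_sub_one
    (div_nonneg (add_nonneg hb0 ht0) hbt.le) hp0.le hp2
  have hsq : (1 - b ^ 2) * ((1 - t) / (1 + t)) ≤ 1 - ((b + t) / (1 + b * t)) ^ 2 := by
    rw [one_sub_sq_div_one_add_mul hbt.ne', mul_div_assoc]
    exact mul_le_mul_of_nonneg_left
      (one_sub_div_one_add_le_one_sub_sq_div hb0 hb1.le ht0 ht1.le) (by nlinarith)
  linarith [mul_le_mul_of_nonneg_left hsq (by linarith : (0 : ℝ) ≤ p / 2)]
end
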